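/- Let V = {(x_1,y_1),…,(x_8,y_8)} ⊂ ℝ² be eight points whose compressed Vandermonde matrix W on the monomial basis {1, x, y, x², xy, y², x³, x²y} is invertible. Suppose q_1, q_2 are cubic polynomials vanishing on V with leading monomials xy² and y³, and s_1, s_2 are quartic polynomials vanishing on V with leading monomials x⁴ and x³y, each of whose remaining terms are supported on {1, x, y, x², xy, y², x³, x²y}. Then every polynomial p of degree ≤ 6 vanishing identically on V admits a representation p = A q_1 + B q_2 + C s_1 + D s_2 with deg A, deg B ≤ 3 and deg C, deg D ≤ 2. -/
import Mathlib


open MvPolynomial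

/-- The exponent Finsupp of the monomial `x^i y^j`. -/
noncomputable def mIdx (i j : ℕ) : Fin 2 →₀ ℕ := Finsupp.single 0 i + Finsupp.single 1 j

/-- The monomial `x^i y^j` as a bivariate real polynomial. -/
noncomputable def mono (i j : ℕ) : MvPolynomial (Fin 2) ℝ := monomial (mIdx i j) 1

/-- Evaluation of a bivariate polynomial at a point of `ℝ²`. -/
noncomputable def evalAt (z : ℝ × ℝ) (p : MvPolynomial (Fin 2) ℝ) : ℝ := eval ![z.1, z.2] p

/-- Graded lexicographic order (with `x > y`) on exponent pairs. -/
def glexLt (a b : ℕ × ℕ) : Prop :=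
  a.1 + a.2 < b.1 + b.2 ∨ (a.1 + a.2 = b.1 + b.2 ∧ a.1 < b.1)

/-- `q` has leading monomial `x^i y^j` (with coefficient 1) in graded lex order `x > y`. -/
def HasLeading (q : MvPolynomial (Fin 2) ℝ) (i j : ℕ) : Prop :=
  q.coeff (mIdx i j) = 1 ∧ ∀ d ∈ q.support, d ≠ mIdx i j → glexLt (d 0, d 1) (i, j)

/-- The basis of monomials `{1, x, y, x², xy, y², x³, x²y}`. -/
def bas8 : Fin 8 → ℕ × ℕ := ![(0,0),(1,0),(0,1),(2,0),(1,1),(0,2),(3,0),(2,1)]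

/-- The compressed Vandermonde matrix of eight points on the basis `bas8`. -/
def W8 (pts : Fin 8 → ℝ × ℝ) : Matrix (Fin 8) (Fin 8) ℝ :=
  Matrix.of fun k m => (pts k).1 ^ (bas8 m).1 * (pts k).2 ^ (bas8 m).2

-- ==== auxiliary development ====

lemma mIdx_apply0 (i j : ℕ) : mIdx i j 0 = i := by
  simp [mIdx, Finsupp.single_apply]

lemma mIdx_apply1 (i j : ℕ) : mIdx i j 1 = j := by
  simp [mIdx, Finsupp.single_apply]

lemma eq_mIdx (d : Fin 2 →₀ ℕ) : d = mIdx (d 0) (d 1) := by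
  ext x
  fin_cases x <;> simp [mIdx, Finsupp.single_apply]

lemma mIdx_add (a b c d : ℕ) : mIdx a b + mIdx c d = mIdx (a + c) (b + d) := by
  ext x
  fin_cases x <;> simp [mIdx, Finsupp.single_apply]

lemma degSum (d : Fin 2 →₀ ℕ) : (d.sum fun _ e => e) = d 0 + d 1 := by
  rw [Finsupp.sum_fintype]
  · exact Fin.sum_univ_two d
  · intro _; rfl

/-- Triangular numbers. -/
def Tnum : ℕ → ℕ
  | 0 => 0
  | n+1 => Tnum n + (n+1)

lemma Tnum_strict {m n : ℕ} (h : m < n) : Tnum m + m < Tnum n := by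
  induction n with
  | zero => omega
  | succ n ih =>
    rcases Nat.lt_succ_iff_lt_or_eq.mp h with h' | h'
    · have := ih h'
      simp only [Tnum]
      omega
    · subst h'
      simp only [Tnum]
      omega

/-- Glex rank of an exponent pair. -/
def Rp (a : ℕ × ℕ) : ℕ := Tnum (a.1 + a.2) + a.1

lemma Rp_lt_of_glex {a b : ℕ × ℕ} (h : glexLt a b) : Rp a < Rp b := by
  rcases h with h | ⟨h1, h2⟩
  · have := Tnum_strict h
    unfold Rp
    omega
  · unfold Rp
    rw [h1]
    omega

lemma Rp_inj {a b : ℕ × ℕ} (h : Rp a = Rp b) : a = b := by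
  by_contra hne
  have htot : glexLt a b ∨ glexLt b a := by
    rcases a with ⟨a1, a2⟩
    rcases b with ⟨b1, b2⟩
    simp only [Prod.mk.injEq, not_and] at hne
    unfold glexLt
    simp only
    omega
  rcases htot with h' | h' <;> have := Rp_lt_of_glex h' <;> omega

/-- Rank of an exponent Finsupp. -/
noncomputable def R2 (d : Fin 2 →₀ ℕ) : ℕ := Rp (d 0, d 1)

/-- Membership of an exponent in the 8-element basis. -/
def inB (d : Fin 2 →₀ ℕ) : Prop :=
  (d 0, d 1) ∈ ({(0,0),(1,0),(0,1),(2,0),(1,1),(0,2),(3,0),(2,1)} : Set (ℕ × ℕ))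

instance inB_dec : DecidablePred inB := fun d =>
  decidable_of_iff ((d 0, d 1) = (0,0) ∨ (d 0, d 1) = (1,0) ∨ (d 0, d 1) = (0,1) ∨
      (d 0, d 1) = (2,0) ∨ (d 0, d 1) = (1,1) ∨ (d 0, d 1) = (0,2) ∨
      (d 0, d 1) = (3,0) ∨ (d 0, d 1) = (2,1))
    (by simp [inB, Set.mem_insert_iff, Set.mem_singleton_iff])

/-- Measure: one plus the largest rank of a non-basis monomial in the support. -/
noncomputable def mea (p : MvPolynomial (Fin 2) ℝ) : ℕ :=
  (p.support.filter fun d => ¬ inB d).sup fun d => R2 d + 1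

lemma tdeg_le {p : MvPolynomial (Fin 2) ℝ} {n : ℕ}
    (h : ∀ d ∈ p.support, d 0 + d 1 ≤ n) : p.totalDegree ≤ n := by
  apply Finset.sup_le
  intro d hd
  rw [degSum]
  exact h d hd

lemma tdeg_mem {p : MvPolynomial (Fin 2) ℝ} {d : Fin 2 →₀ ℕ} (h : d ∈ p.support) :
    d 0 + d 1 ≤ p.totalDegree := by
  rw [← degSum]
  exact le_totalDegree h

lemma reduce_step (g : MvPolynomial (Fin 2) ℝ) (li lj a b : ℕ)
    (hg : HasLeading g li lj) (hdg : g.totalDegree ≤ li + lj)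
    (p : MvPolynomial (Fin 2) ℝ) (hp6 : p.totalDegree ≤ 6)
    (hab : a + b + (li + lj) ≤ 6) (n : ℕ)
    (hsup : mea p = R2 (mIdx (a + li) (b + lj)) + 1) (hmu : mea p ≤ n + 1) :
    ∃ E p' : MvPolynomial (Fin 2) ℝ, E.totalDegree ≤ a + b ∧ p'.totalDegree ≤ 6 ∧
      mea p' ≤ n ∧ p = E * g + p' := by
  classical
  set t : Fin 2 →₀ ℕ := mIdx (a + li) (b + lj) with ht
  set e : Fin 2 →₀ ℕ := mIdx a b with he
  set c : ℝ := p.coeff t with hc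
  have htel : t = e + mIdx li lj := by rw [he, mIdx_add]
  refine ⟨monomial e c, p - monomial e c * g, ?_, ?_, ?_, by ring⟩
  · calc (monomial e c).totalDegree ≤ e.sum fun _ k => k := totalDegree_monomial_le _ _
      _ = a + b := by rw [degSum, he, mIdx_apply0, mIdx_apply1]
  · refine le_trans (totalDegree_sub _ _) (max_le hp6 ?_)
    refine le_trans (totalDegree_mul _ _) ?_
    have h1 : (monomial e c).totalDegree ≤ a + b := by
      calc (monomial e c).totalDegree ≤ e.sum fun _ k => k := totalDegree_monomial_le _ _
        _ = a + b := by rw [degSum, he, mIdx_apply0, mIdx_apply1]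
    omega
  · -- measure decreases
    have hct : (p - monomial e c * g).coeff t = 0 := by
      rw [coeff_sub, htel, coeff_monomial_mul, hg.1, mul_one, hc, ← htel, sub_self]
    apply Finset.sup_le
    intro d hd
    rw [Finset.mem_filter] at hd
    obtain ⟨hds, hdnb⟩ := hd
    rw [mem_support_iff] at hds
    have hdt : d ≠ t := by
      intro h; rw [h] at hds; exact hds hct
    have hRlt : R2 d < R2 t := by
      rw [coeff_sub] at hds
      by_cases hmg : (monomial e c * g).coeff d = 0
      · -- d is in the support of p
        have hdp : d ∈ p.support := by
          rw [mem_support_iff]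
          intro h; rw [h, hmg, sub_self] at hds; exact hds rfl
        have hle : R2 d + 1 ≤ mea p :=
          Finset.le_sup (f := fun d => R2 d + 1)
            (Finset.mem_filter.mpr ⟨hdp, hdnb⟩)
        have hne : R2 d ≠ R2 t := by
          intro h
          apply hdt
          have := Rp_inj (a := (d 0, d 1)) (b := (t 0, t 1)) h
          rw [eq_mIdx d, eq_mIdx t]
          rw [Prod.mk.injEq] at this
          rw [this.1, this.2]
        omega
      · -- d comes from the shifted support of g
        rw [coeff_monomial_mul'] at hmg
        by_cases hle : e ≤ d
        · rw [if_pos hle] at hmg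
          have hfg : (d - e) ∈ g.support := by
            rw [mem_support_iff]; intro h; rw [h, mul_zero] at hmg; exact hmg rfl
          have hde : e + (d - e) = d := add_tsub_cancel_of_le hle
          have hfne : d - e ≠ mIdx li lj := by
            intro h
            apply hdt
            rw [← hde, h, htel]
          have hglex := hg.2 _ hfg hfne
          have h0 : d 0 = a + (d - e) 0 := by
            rw [← hde]; simp [he, mIdx_apply0]
          have h1 : d 1 = b + (d - e) 1 := by
            rw [← hde]; simp [he, mIdx_apply1]
          have hglex2 : glexLt (d 0, d 1) (a + li, b + lj) := by
            rcases hglex with h | ⟨hh1, hh2⟩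
            · left; simp only at h ⊢; omega
            · right; simp only at hh1 hh2 ⊢; omega
          have := Rp_lt_of_glex hglex2
          unfold R2
          rw [ht, mIdx_apply0, mIdx_apply1]
          exact this
        · rw [if_neg hle] at hmg; exact absurd rfl hmg
    have : R2 t + 1 ≤ n + 1 := by omega
    omega

lemma reduce (q1 q2 s1 s2 : MvPolynomial (Fin 2) ℝ)
    (hd1 : q1.totalDegree ≤ 3) (hl1 : HasLeading q1 1 2)
    (hd2 : q2.totalDegree ≤ 3) (hl2 : HasLeading q2 0 3)
    (hd3 : s1.totalDegree ≤ 4) (hl3 : HasLeading s1 4 0)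
    (hd4 : s2.totalDegree ≤ 4) (hl4 : HasLeading s2 3 1) :
    ∀ n (p : MvPolynomial (Fin 2) ℝ), p.totalDegree ≤ 6 → mea p ≤ n →
    ∃ A B C D r : MvPolynomial (Fin 2) ℝ,
      A.totalDegree ≤ 3 ∧ B.totalDegree ≤ 3 ∧ C.totalDegree ≤ 2 ∧ D.totalDegree ≤ 2 ∧
      (∀ d ∈ r.support, inB d) ∧ p = A * q1 + B * q2 + C * s1 + D * s2 + r := by
  intro n
  induction n with
  | zero =>
    intro p hp6 hmu
    refine ⟨0, 0, 0, 0, p, by simp, by simp, by simp, by simp, ?_, by ring⟩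
    intro d hd
    by_contra hnb
    have : d ∈ p.support.filter fun d => ¬ inB d := Finset.mem_filter.mpr ⟨hd, hnb⟩
    have h2 : R2 d + 1 ≤ mea p := Finset.le_sup (f := fun d => R2 d + 1) this
    omega
  | succ n ih =>
    intro p hp6 hmu
    by_cases h0 : mea p ≤ n
    · exact ih p hp6 h0
    have hmeq : mea p = n + 1 := by omega
    have hne : (p.support.filter fun d => ¬ inB d).Nonempty := by
      rw [Finset.nonempty_iff_ne_empty]
      intro h
      unfold mea at hmeq
      rw [h] at hmeq
      simp at hmeq
    obtain ⟨d, hdmem, hdsup⟩ := Finset.exists_mem_eq_sup _ hne (fun d => R2 d + 1)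
    rw [Finset.mem_filter] at hdmem
    obtain ⟨hdp, hdnb⟩ := hdmem
    have hsup : mea p = R2 d + 1 := hdsup
    have hdeg : d 0 + d 1 ≤ 6 := le_trans (tdeg_mem hdp) hp6
    have hmIdx : ∀ i j : ℕ, i = d 0 → j = d 1 → mIdx i j = d := by
      intro i j hi hj
      rw [hi, hj]
      exact (eq_mIdx d).symm
    -- case analysis on which generator to use
    by_cases c1 : 1 ≤ d 0 ∧ 2 ≤ d 1
    · -- use q1, leading (1,2)
      obtain ⟨E, p', hE, hp'6, hmu', heq⟩ :=
        reduce_step q1 1 2 (d 0 - 1) (d 1 - 2) hl1 hd1 p hp6 (by omega) n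
          (by rw [hmIdx _ _ (by omega) (by omega)]; exact hsup) (by omega)
      obtain ⟨A, B, C, D, r, hA, hB, hC, hD, hr, hreq⟩ := ih p' hp'6 hmu'
      refine ⟨A + E, B, C, D, r, ?_, hB, hC, hD, hr, ?_⟩
      · exact le_trans (totalDegree_add _ _) (max_le hA (le_trans hE (by omega)))
      · rw [heq, hreq]; ring
    by_cases c2 : 3 ≤ d 1
    · -- use q2, leading (0,3)
      obtain ⟨E, p', hE, hp'6, hmu', heq⟩ :=
        reduce_step q2 0 3 (d 0) (d 1 - 3) hl2 hd2 p hp6 (by omega) n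
          (by rw [hmIdx _ _ (by omega) (by omega)]; exact hsup) (by omega)
      obtain ⟨A, B, C, D, r, hA, hB, hC, hD, hr, hreq⟩ := ih p' hp'6 hmu'
      refine ⟨A, B + E, C, D, r, hA, ?_, hC, hD, hr, ?_⟩
      · exact le_trans (totalDegree_add _ _) (max_le hB (le_trans hE (by omega)))
      · rw [heq, hreq]; ring
    by_cases c3 : 4 ≤ d 0 ∧ d 1 = 0
    · -- use s1, leading (4,0)
      obtain ⟨E, p', hE, hp'6, hmu', heq⟩ :=
        reduce_step s1 4 0 (d 0 - 4) (d 1) hl3 hd3 p hp6 (by omega) n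
          (by rw [hmIdx _ _ (by omega) (by omega)]; exact hsup) (by omega)
      obtain ⟨A, B, C, D, r, hA, hB, hC, hD, hr, hreq⟩ := ih p' hp'6 hmu'
      refine ⟨A, B, C + E, D, r, hA, hB, ?_, hD, hr, ?_⟩
      · exact le_trans (totalDegree_add _ _) (max_le hC (le_trans hE (by omega)))
      · rw [heq, hreq]; ring
    by_cases c4 : 3 ≤ d 0 ∧ d 1 = 1
    · -- use s2, leading (3,1)
      obtain ⟨E, p', hE, hp'6, hmu', heq⟩ :=
        reduce_step s2 3 1 (d 0 - 3) (d 1 - 1) hl4 hd4 p hp6 (by omega) n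
          (by rw [hmIdx _ _ (by omega) (by omega)]; exact hsup) (by omega)
      obtain ⟨A, B, C, D, r, hA, hB, hC, hD, hr, hreq⟩ := ih p' hp'6 hmu'
      refine ⟨A, B, C, D + E, r, hA, hB, hC, ?_, hr, ?_⟩
      · exact le_trans (totalDegree_add _ _) (max_le hD (le_trans hE (by omega)))
      · rw [heq, hreq]; ring
    · -- remaining exponents are in the basis: contradiction
      exfalso
      apply hdnb
      unfold inB
      simp only [Set.mem_insert_iff, Set.mem_singleton_iff, Prod.mk.injEq]
      omega

/-- The exponent of the `m`-th basis monomial. -/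
noncomputable def pIdx (m : Fin 8) : Fin 2 →₀ ℕ := mIdx (bas8 m).1 (bas8 m).2

lemma bas8_inj : Function.Injective bas8 := by decide

lemma pIdx_inj : Function.Injective pIdx := by
  intro m m' h
  apply bas8_inj
  have h0 := DFunLike.congr_fun h (0 : Fin 2)
  have h1 := DFunLike.congr_fun h (1 : Fin 2)
  rw [pIdx, pIdx, mIdx_apply0, mIdx_apply0] at h0
  rw [pIdx, pIdx, mIdx_apply1, mIdx_apply1] at h1
  exact Prod.ext h0 h1

lemma inB_exists {d : Fin 2 →₀ ℕ} (h : inB d) : ∃ m : Fin 8, pIdx m = d := by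
  unfold inB at h
  simp only [Set.mem_insert_iff, Set.mem_singleton_iff] at h
  have key : ∀ m : Fin 8, (d 0, d 1) = bas8 m → ∃ m : Fin 8, pIdx m = d := by
    intro m hm
    refine ⟨m, ?_⟩
    rw [pIdx, ← hm]
    exact (eq_mIdx d).symm
  rcases h with h | h | h | h | h | h | h | h
  · exact key 0 (by rw [h]; rfl)
  · exact key 1 (by rw [h]; rfl)
  · exact key 2 (by rw [h]; rfl)
  · exact key 3 (by rw [h]; rfl)
  · exact key 4 (by rw [h]; rfl)
  · exact key 5 (by rw [h]; rfl)
  · exact key 6 (by rw [h]; rfl)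
  · exact key 7 (by rw [h]; rfl)

lemma evalAt_eq (z : ℝ × ℝ) (r : MvPolynomial (Fin 2) ℝ) :
    evalAt z r = ∑ d ∈ r.support, r.coeff d * (z.1 ^ d 0 * z.2 ^ d 1) := by
  rw [evalAt, eval_eq']
  apply Finset.sum_congr rfl
  intro d _
  rw [Fin.prod_univ_two]
  simp [Matrix.cons_val_zero, Matrix.cons_val_one, Matrix.head_cons]

lemma vanish_zero (pts : Fin 8 → ℝ × ℝ) (hW : IsUnit (W8 pts).det)
    (r : MvPolynomial (Fin 2) ℝ) (hsupp : ∀ d ∈ r.support, inB d)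
    (h0 : ∀ k, evalAt (pts k) r = 0) : r = 0 := by
  classical
  set c : Fin 8 → ℝ := fun m => r.coeff (pIdx m) with hc
  have hsub : r.support ⊆ Finset.univ.image pIdx := by
    intro d hd
    obtain ⟨m, hm⟩ := inB_exists (hsupp d hd)
    exact Finset.mem_image.mpr ⟨m, Finset.mem_univ m, hm⟩
  have hmv : (W8 pts).mulVec c = 0 := by
    funext k
    have heval : evalAt (pts k) r = ∑ m : Fin 8, W8 pts k m * c m := by
      rw [evalAt_eq]
      rw [Finset.sum_subset hsub (fun d _ hd => by
        rw [notMem_support_iff.mp hd, zero_mul])]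
      rw [Finset.sum_image (fun m _ m' _ h => pIdx_inj h)]
      apply Finset.sum_congr rfl
      intro m _
      rw [hc]
      simp only [pIdx, mIdx_apply0, mIdx_apply1, W8, Matrix.of_apply]
      ring
    rw [Matrix.mulVec, dotProduct]
    simp only [Pi.zero_apply]
    rw [← heval, h0 k]
  have hcz : c = 0 := by
    have h1 := congrArg (fun v => (W8 pts)⁻¹.mulVec v) hmv
    simp only [Matrix.mulVec_mulVec, Matrix.nonsing_inv_mul (W8 pts) hW,
      Matrix.one_mulVec, Matrix.mulVec_zero] at h1
    exact h1
  rw [eq_zero_iff]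
  intro d
  by_contra hdz
  have hd : d ∈ r.support := mem_support_iff.mpr hdz
  obtain ⟨m, hm⟩ := inB_exists (hsupp d hd)
  apply hdz
  rw [← hm]
  show c m = 0
  rw [hcz]
  rfl

lemma quartic_facts (s : MvPolynomial (Fin 2) ℝ) (li lj : ℕ) (hlj : li + lj = 4)
    (hsc : s.coeff (mIdx li lj) = 1)
    (hssupp : ∀ d ∈ s.support, d ≠ mIdx li lj →
      (d 0, d 1) ∈ ({(0,0),(1,0),(0,1),(2,0),(1,1),(0,2),(3,0),(2,1)} : Set (ℕ × ℕ))) :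
    s.totalDegree ≤ 4 ∧ HasLeading s li lj := by
  have hsum : ∀ d ∈ s.support, d ≠ mIdx li lj → d 0 + d 1 ≤ 3 := by
    intro d hd hne
    have := hssupp d hd hne
    simp only [Set.mem_insert_iff, Set.mem_singleton_iff, Prod.mk.injEq] at this
    omega
  constructor
  · apply tdeg_le
    intro d hd
    by_cases hne : d = mIdx li lj
    · rw [hne, mIdx_apply0, mIdx_apply1]
      omega
    · have := hsum d hd hne
      omega
  · refine ⟨hsc, ?_⟩
    intro d hd hne
    have := hsum d hd hne
    left
    simp only
    omega

theorem representation_rank8_case1' (pts : Fin 8 → ℝ × ℝ)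
    (hW : IsUnit (W8 pts).det)
    (q1 q2 s1 s2 : MvPolynomial (Fin 2) ℝ)
    (hd1 : q1.totalDegree ≤ 3) (hl1 : HasLeading q1 1 2) (hv1 : ∀ k, evalAt (pts k) q1 = 0)
    (hd2 : q2.totalDegree ≤ 3) (hl2 : HasLeading q2 0 3) (hv2 : ∀ k, evalAt (pts k) q2 = 0)
    (hs1c : s1.coeff (mIdx 4 0) = 1)
    (hs1supp : ∀ d ∈ s1.support, d ≠ mIdx 4 0 →
      (d 0, d 1) ∈ ({(0,0),(1,0),(0,1),(2,0),(1,1),(0,2),(3,0),(2,1)} : Set (ℕ × ℕ)))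
    (hvs1 : ∀ k, evalAt (pts k) s1 = 0)
    (hs2c : s2.coeff (mIdx 3 1) = 1)
    (hs2supp : ∀ d ∈ s2.support, d ≠ mIdx 3 1 →
      (d 0, d 1) ∈ ({(0,0),(1,0),(0,1),(2,0),(1,1),(0,2),(3,0),(2,1)} : Set (ℕ × ℕ)))
    (hvs2 : ∀ k, evalAt (pts k) s2 = 0) :
    ∀ p : MvPolynomial (Fin 2) ℝ, p.totalDegree ≤ 6 → (∀ k, evalAt (pts k) p = 0) →
      ∃ A B C D : MvPolynomial (Fin 2) ℝ,
        A.totalDegree ≤ 3 ∧ B.totalDegree ≤ 3 ∧ C.totalDegree ≤ 2 ∧ D.totalDegree ≤ 2 ∧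
        p = A * q1 + B * q2 + C * s1 + D * s2 := by
  intro p hp6 hpv
  obtain ⟨hd3, hl3⟩ := quartic_facts s1 4 0 rfl hs1c hs1supp
  obtain ⟨hd4, hl4⟩ := quartic_facts s2 3 1 rfl hs2c hs2supp
  obtain ⟨A, B, C, D, r, hA, hB, hC, hD, hr, heq⟩ :=
    reduce q1 q2 s1 s2 hd1 hl1 hd2 hl2 hd3 hl3 hd4 hl4 (mea p) p hp6 le_rfl
  have hr0 : ∀ k, evalAt (pts k) r = 0 := by
    intro k
    have h := hpv k
    rw [heq] at h
    have e1 := hv1 k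
    have e2 := hv2 k
    have e3 := hvs1 k
    have e4 := hvs2 k
    simp only [evalAt, map_add, map_mul] at h e1 e2 e3 e4 ⊢
    rw [e1, e2, e3, e4] at h
    simpa using h
  have hrz : r = 0 := vanish_zero pts hW r hr hr0
  exact ⟨A, B, C, D, hA, hB, hC, hD, by rw [heq, hrz, add_zero]⟩

/-- every polynomial of degree ≤ 6 vanishing on the eight points can be
written as `A q₁ + B q₂ + C s₁ + D s₂`. -/
theorem representation_rank8_case1 (pts : Fin 8 → ℝ × ℝ)
    (hW : IsUnit (W8 pts).det)
    (q1 q2 s1 s2 : MvPolynomial (Fin 2) ℝ)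
    (hd1 : q1.totalDegree ≤ 3) (hl1 : HasLeading q1 1 2) (hv1 : ∀ k, evalAt (pts k) q1 = 0)
    (hd2 : q2.totalDegree ≤ 3) (hl2 : HasLeading q2 0 3) (hv2 : ∀ k, evalAt (pts k) q2 = 0)
    (hs1c : s1.coeff (mIdx 4 0) = 1)
    (hs1supp : ∀ d ∈ s1.support, d ≠ mIdx 4 0 →
      (d 0, d 1) ∈ ({(0,0),(1,0),(0,1),(2,0),(1,1),(0,2),(3,0),(2,1)} : Set (ℕ × ℕ)))
    (hvs1 : ∀ k, evalAt (pts k) s1 = 0)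
    (hs2c : s2.coeff (mIdx 3 1) = 1)
    (hs2supp : ∀ d ∈ s2.support, d ≠ mIdx 3 1 →
      (d 0, d 1) ∈ ({(0,0),(1,0),(0,1),(2,0),(1,1),(0,2),(3,0),(2,1)} : Set (ℕ × ℕ)))
    (hvs2 : ∀ k, evalAt (pts k) s2 = 0) :
    ∀ p : MvPolynomial (Fin 2) ℝ, p.totalDegree ≤ 6 → (∀ k, evalAt (pts k) p = 0) →
      ∃ A B C D : MvPolynomial (Fin 2) ℝ,
        A.totalDegree ≤ 3 ∧ B.totalDegree ≤ 3 ∧ C.totalDegree ≤ 2 ∧ D.totalDegree ≤ 2 ∧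
        p = A * q1 + B * q2 + C * s1 + D * s2 :=
  representation_rank8_case1' pts hW q1 q2 s1 s2 hd1 hl1 hv1 hd2 hl2 hv2 hs1c hs1supp hvs1
    hs2c hs2supp hvs2
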